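/- arXiv:2107.06864 — 2 statements merged into one kernel-verified Lean document; each statement's English description precedes it below -/
import Mathlib

section
/- For every p ∈ ℕ₀, every k_1 ∈ ℕ, and every n ∈ ℕ, one has H_n(−p, k_1) = H_n(−p)·H_n(k_1) − Σ_{j_1 = p+2−k_1}^{p} binom(p+1, j_1)·(B_{j_1}/(p+1))·H_n(k_1 + j_1 − p − 1) − Σ_{j_1=0}^{p+1−k_1} Σ_{j_2=0}^{p+1−k_1−j_1} binom(p+1, j_1)·binom(p+2−k_1−j_1, j_2)·(B_{j_1} B_{j_2}/((p+1)(p+2−k_1−j_1)))·n^{p+2−k_1−j_1−j_2}, where any sum whose upper limit is smaller than its lower limit is empty. -/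
open Finset


/-- Extended multiple harmonic sum `H_n(k_1,…,k_r) = ∑_{n ≥ n_1 > ⋯ > n_r ≥ 1} 1/(n_1^{k_1} ⋯ n_r^{k_r})`,
with `H_n(∅) = 1`; the exponents may be arbitrary integers.  In particular `Hs n [-(p:ℤ)] = ∑_{m=1}^n m^p`
and `Hs n [1]` is the `n`-th harmonic number. -/
def Hs : ℕ → List ℤ → ℚ
  | _, [] => 1
  | n, k :: ks => ∑ m ∈ Finset.Icc 1 n, ((m : ℚ) ^ k)⁻¹ * Hs (m - 1) ks

lemma Hs_single (k : ℤ) (n : ℕ) : Hs n [k] = ∑ m ∈ Icc 1 n, ((m:ℚ)^k)⁻¹ := by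
  simp [Hs]

lemma Hs_cons (a b : ℤ) (n : ℕ) :
    Hs n [a, b] = ∑ m ∈ Icc 1 n, ((m:ℚ)^a)⁻¹ * Hs (m-1) [b] := rfl

lemma Hs_neg (p n : ℕ) : Hs n [-(p:ℤ)] = ∑ m ∈ Icc 1 n, (m:ℚ)^p := by
  rw [Hs_single]; exact sum_congr rfl fun m _ => by rw [zpow_neg, inv_inv, zpow_natCast]

lemma faulhaber' (p l : ℕ) : ∑ m ∈ Icc 1 l, (m:ℚ)^p =
    ∑ i ∈ range (p+1), bernoulli' i * (p+1).choose i * (l:ℚ)^(p+1-i)/(p+1) := by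
  rw [← Finset.Ico_add_one_right_eq_Icc]; exact sum_Ico_pow l p

lemma key (p : ℕ) (k : ℤ) (n : ℕ) :
    Hs n [-(p:ℤ), k] = Hs n [-(p:ℤ)] * Hs n [k]
      - ∑ l ∈ Icc 1 n, ((l:ℚ)^k)⁻¹ * Hs l [-(p:ℤ)] := by
  induction n with
  | zero => simp [Hs]
  | succ n ih =>
    have hs1 : Hs (n+1) [k] = Hs n [k] + (((n+1:ℕ):ℚ)^k)⁻¹ := by
      rw [Hs_single, Hs_single, Finset.sum_Icc_succ_top (Nat.le_add_left 1 n)]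
    have hs2 : Hs (n+1) [-(p:ℤ)] = Hs n [-(p:ℤ)] + ((n+1:ℕ):ℚ)^p := by
      rw [Hs_neg, Hs_neg, Finset.sum_Icc_succ_top (Nat.le_add_left 1 n)]
    have hs3 : Hs (n+1) [-(p:ℤ), k] = Hs n [-(p:ℤ), k]
        + (((n+1:ℕ):ℚ)^p) * Hs n [k] := by
      rw [Hs_cons, Finset.sum_Icc_succ_top (Nat.le_add_left 1 n), ← Hs_cons]
      congr 1
      rw [zpow_neg, inv_inv, zpow_natCast, Nat.add_sub_cancel]
    rw [hs3, ih, hs1, hs2, Finset.sum_Icc_succ_top (Nat.le_add_left 1 n), hs2]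
    ring

lemma faulhaber'' (q m n : ℕ) (h : m = q + 1) : ∑ l ∈ Icc 1 n, (l:ℚ)^q =
    ∑ j ∈ range m, bernoulli' j * m.choose j * (n:ℚ)^(m-j)/m := by
  subst h; exact_mod_cast faulhaber' q n


/-- For `p ∈ ℕ₀`, `k₁ ∈ ℕ`, `n ∈ ℕ`:
`H_n(−p, k₁) = H_n(−p)·H_n(k₁)
  − ∑_{j₁=p+2−k₁}^{p} binom(p+1,j₁)·(B_{j₁}/(p+1))·H_n(k₁+j₁−p−1)
  − ∑_{j₁=0}^{p+1−k₁} ∑_{j₂=0}^{p+1−k₁−j₁} binom(p+1,j₁) binom(p+2−k₁−j₁,j₂)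
      ·(B_{j₁}B_{j₂}/((p+1)(p+2−k₁−j₁)))·n^{p+2−k₁−j₁−j₂}`,
where sums whose upper limit is below the lower limit are empty (and negative lower limits are
truncated at `0`); the upper-limit constraints are encoded by the `if`-guards. -/
theorem stmt_1 (p : ℕ) (k₁ : ℕ) (hk₁ : 0 < k₁) (n : ℕ) (hn : 0 < n) :
    Hs n [-(p : ℤ), (k₁ : ℤ)] =
      Hs n [-(p : ℤ)] * Hs n [(k₁ : ℤ)]
      - ∑ j₁ ∈ Finset.Icc (p + 2 - k₁) p,
          ((p + 1).choose j₁ : ℚ) * (bernoulli' j₁ / (p + 1)) * Hs n [(k₁ : ℤ) + j₁ - p - 1]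
      - ∑ j₁ ∈ Finset.range (p + 2), ∑ j₂ ∈ Finset.range (p + 2),
          (if j₁ + k₁ ≤ p + 1 ∧ j₁ + j₂ + k₁ ≤ p + 1 then
            ((p + 1).choose j₁ : ℚ) * ((p + 2 - k₁ - j₁).choose j₂ : ℚ) *
              (bernoulli' j₁ * bernoulli' j₂ / ((p + 1) * ((p + 2 - k₁ - j₁ : ℕ) : ℚ))) *
              (n : ℚ) ^ (p + 2 - k₁ - j₁ - j₂)
          else 0) := by
  rw [key, sub_sub]
  congr 1
  have hT : ∑ l ∈ Icc 1 n, ((l:ℚ)^(k₁:ℤ))⁻¹ * Hs l [-(p:ℤ)]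
      = ∑ i ∈ range (p+1), ∑ l ∈ Icc 1 n,
          (bernoulli' i * ((p+1).choose i : ℚ) / ((p:ℚ)+1)) * (((l:ℚ)^(k₁:ℤ))⁻¹ * (l:ℚ)^(p+1-i)) := by
    rw [Finset.sum_comm]
    refine sum_congr rfl fun l _ => ?_
    rw [Hs_neg, faulhaber', mul_sum]
    refine sum_congr rfl fun i _ => ?_
    push_cast
    ring
  rw [hT, ← Finset.sum_filter_add_sum_filter_not (range (p+1)) (fun i => p+2 ≤ i + k₁)]
  have hfilter1 : filter (fun i => p+2 ≤ i + k₁) (range (p+1)) = Icc (p+2-k₁) p := by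
    ext i; simp only [mem_filter, mem_range, mem_Icc]; omega
  have hfilter2 : filter (fun i => ¬ (p+2 ≤ i + k₁)) (range (p+1))
      = filter (fun i => i + k₁ ≤ p+1) (range (p+2)) := by
    ext i; simp only [mem_filter, mem_range]; omega
  rw [hfilter1, hfilter2]
  congr 1
  · -- first sum
    refine sum_congr rfl fun i hi => ?_
    simp only [mem_Icc] at hi
    rw [Hs_single, Finset.mul_sum]
    refine sum_congr rfl fun l hl => ?_
    simp only [mem_Icc] at hl
    have hl0 : (l:ℚ) ≠ 0 := Nat.cast_ne_zero.2 (by omega)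
    have hpow : ((l:ℚ)^(k₁:ℤ))⁻¹ * (l:ℚ)^(p+1-i) = ((l:ℚ)^((k₁:ℤ) + i - p - 1))⁻¹ := by
      have h1 : (k₁:ℤ) = ((k₁:ℤ) + i - p - 1) + ((p+1-i : ℕ):ℤ) := by omega
      conv_lhs => rw [h1]
      rw [zpow_add₀ hl0, mul_inv, zpow_natCast, mul_assoc,
        inv_mul_cancel₀ (pow_ne_zero _ hl0), mul_one]
    rw [hpow]
    ring
  · -- second sum
    have hinner : ∀ j₁ ∈ range (p+2),
        (∑ j₂ ∈ range (p+2),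
          (if j₁ + k₁ ≤ p + 1 ∧ j₁ + j₂ + k₁ ≤ p + 1 then
            ((p + 1).choose j₁ : ℚ) * ((p + 2 - k₁ - j₁).choose j₂ : ℚ) *
              (bernoulli' j₁ * bernoulli' j₂ / ((p + 1) * ((p + 2 - k₁ - j₁ : ℕ) : ℚ))) *
              (n : ℚ) ^ (p + 2 - k₁ - j₁ - j₂)
          else 0))
        = if j₁ + k₁ ≤ p + 1 then
            ∑ j₂ ∈ range (p+2-k₁-j₁),
              ((p + 1).choose j₁ : ℚ) * ((p + 2 - k₁ - j₁).choose j₂ : ℚ) *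
                (bernoulli' j₁ * bernoulli' j₂ / ((p + 1) * ((p + 2 - k₁ - j₁ : ℕ) : ℚ))) *
                (n : ℚ) ^ (p + 2 - k₁ - j₁ - j₂)
          else 0 := by
      intro j₁ _
      by_cases h : j₁ + k₁ ≤ p + 1
      · rw [if_pos h]
        rw [show (∑ j₂ ∈ range (p+2),
          (if j₁ + k₁ ≤ p + 1 ∧ j₁ + j₂ + k₁ ≤ p + 1 then
            ((p + 1).choose j₁ : ℚ) * ((p + 2 - k₁ - j₁).choose j₂ : ℚ) *
              (bernoulli' j₁ * bernoulli' j₂ / ((p + 1) * ((p + 2 - k₁ - j₁ : ℕ) : ℚ))) *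
              (n : ℚ) ^ (p + 2 - k₁ - j₁ - j₂)
          else 0)) = ∑ j₂ ∈ range (p+2),
          (if j₂ < p+2-k₁-j₁ then
            ((p + 1).choose j₁ : ℚ) * ((p + 2 - k₁ - j₁).choose j₂ : ℚ) *
              (bernoulli' j₁ * bernoulli' j₂ / ((p + 1) * ((p + 2 - k₁ - j₁ : ℕ) : ℚ))) *
              (n : ℚ) ^ (p + 2 - k₁ - j₁ - j₂)
          else 0) from sum_congr rfl fun j₂ _ => if_congr (by omega) rfl rfl,
          ← Finset.sum_filter]
        congr 1
        ext x; simp only [mem_filter, mem_range]; omega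
      · rw [if_neg h]
        exact Finset.sum_eq_zero fun j₂ _ => if_neg (fun hc => h hc.1)
    rw [Finset.sum_congr rfl hinner, ← Finset.sum_filter]
    refine sum_congr rfl fun j₁ hj₁ => ?_
    simp only [mem_filter, mem_range] at hj₁
    have hsum : ∑ l ∈ Icc 1 n, (((l:ℚ)^(k₁:ℤ))⁻¹ * (l:ℚ)^(p+1-j₁))
        = ∑ l ∈ Icc 1 n, (l:ℚ)^(p+1-j₁-k₁) := by
      refine sum_congr rfl fun l hl => ?_
      simp only [mem_Icc] at hl
      have hl0 : (l:ℚ) ≠ 0 := by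
        have : 0 < l := hl.1
        exact_mod_cast this.ne'
      have h2 : p+1-j₁ = k₁ + (p+1-j₁-k₁) := by omega
      conv_lhs => rw [h2]
      rw [pow_add, zpow_natCast, inv_mul_cancel_left₀ (pow_ne_zero _ hl0)]
    rw [← Finset.mul_sum, hsum, faulhaber'' (p+1-j₁-k₁) (p+2-k₁-j₁) n (by omega),
      Finset.mul_sum]
    refine sum_congr rfl fun j₂ _ => ?_
    have hm : (0:ℚ) < ((p+2-k₁-j₁ : ℕ) : ℚ) := by
      have : 0 < p+2-k₁-j₁ := by omega
      exact_mod_cast this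
    have hp1 : ((p:ℚ)+1) ≠ 0 := by positivity
    field_simp
end

section
/- For every p ∈ ℕ₀ and every n ∈ ℕ, one has H_n(−p, 2, 1) = H_n(−p)·H_n(2,1) − B_p·H_n(1,1) − C^{(p)}_1(n)·H_n + C^{(p)}_{1,1}(n). -/
/-- The polynomial `C^{(p)}_{a_2,…,a_r}(x)`, where the list `a = [a_1, a_2, …, a_r]` is the *full*
subscript list including the leading `a_1 = 0` (so `Cpoly p [0]` is `C^{(p)}`, `Cpoly p [0,0]`
is `C^{(p)}_0`, `Cpoly p [0,1,2]` is `C^{(p)}_{1,2}`, …):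
`C^{(p)}_{a_2,…,a_r}(x) = ∑_{j_1,…,j_r ≥ 0, j_1+⋯+j_r ≤ p-a_r}
  (∏_{i=1}^r binom(p+1-a_i-j_1-⋯-j_{i-1}, j_i) B_{j_i} / (p+1-a_i-j_1-⋯-j_{i-1}))
    x^{p+1-a_r-j_1-⋯-j_r}`,
the zero polynomial if `p < a_r`, with `B_j = bernoulli' j`. -/
noncomputable def Cpoly (p : ℕ) (a : List ℕ) : Polynomial ℚ :=
  ∑ j ∈ Fintype.piFinset (fun _ : Fin a.length => Finset.range (p + 1)),
    if (∑ i, j i) + a.getLastD 0 ≤ p then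
      Polynomial.C (∏ i : Fin a.length,
        ((p + 1 - a.get i - ∑ i' ∈ Finset.Iio i, j i').choose (j i) : ℚ) * bernoulli' (j i) /
          ((p + 1 - a.get i - ∑ i' ∈ Finset.Iio i, j i' : ℕ) : ℚ)) *
        Polynomial.X ^ (p + 1 - a.getLastD 0 - ∑ i, j i)
    else 0

open Finset

noncomputable def bb (p j : ℕ) : ℚ := ((p+1).choose j : ℚ) * bernoulli' j / ((p+1 : ℕ) : ℚ)

noncomputable def gg (q : ℕ) (x : ℚ) : ℚ := ∑ j ∈ range (q+1), bb q j * x ^ (q+1-j)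

lemma gg_eq (q n : ℕ) : gg q (n : ℚ) = ∑ m ∈ Icc 1 n, (m:ℚ)^q := by
  have h := sum_Ico_pow n q
  rw [gg]
  rw [show Icc 1 n = Ico 1 (n+1) by rfl, h]
  apply sum_congr rfl
  intro i _
  rw [bb]
  push_cast
  ring

lemma sum_piFinset_zero {M : Type*} [AddCommMonoid M] (s : Finset ℕ) (f : (Fin 0 → ℕ) → M) :
    ∑ j ∈ Fintype.piFinset (fun _ : Fin 0 => s), f j = f (fun i => i.elim0) := by
  rw [Fintype.piFinset_of_isEmpty]
  rw [Finset.sum_eq_single_of_mem (fun i : Fin 0 => i.elim0) (Finset.mem_univ _)]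
  intro b _ hb
  exact absurd (Subsingleton.elim b _) hb

lemma sum_piFinset_succ {M : Type*} [AddCommMonoid M] {k : ℕ} (s : Finset ℕ)
    (f : (Fin (k+1) → ℕ) → M) :
    ∑ j ∈ Fintype.piFinset (fun _ : Fin (k+1) => s), f j
      = ∑ a ∈ s, ∑ j ∈ Fintype.piFinset (fun _ : Fin k => s), f (Fin.cons a j) := by
  rw [← Finset.sum_product']
  refine Finset.sum_nbij' (i := fun j => (j 0, Fin.tail j)) (j := fun x => Fin.cons x.1 x.2)
    ?_ ?_ ?_ ?_ ?_
  · intro j hj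
    simp only [Fintype.mem_piFinset] at hj
    simp only [Finset.mem_product, Fintype.mem_piFinset]
    exact ⟨hj 0, fun i => hj _⟩
  · intro x hx
    simp only [Finset.mem_product, Fintype.mem_piFinset] at hx
    simp only [Fintype.mem_piFinset]
    intro i
    refine Fin.cases ?_ ?_ i
    · simpa using hx.1
    · intro i'; simpa using hx.2 i'
  · intro j _; simp [Fin.cons_self_tail]
  · intro x _; simp
  · intro j _; rw [Fin.cons_self_tail]


lemma sum_piFinset_one {M : Type*} [AddCommMonoid M] (s : Finset ℕ) (f : (Fin 1 → ℕ) → M) :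
    ∑ j ∈ Fintype.piFinset (fun _ : Fin 1 => s), f j = ∑ a ∈ s, f ![a] := by
  rw [sum_piFinset_succ]
  apply sum_congr rfl
  intro a _
  rw [sum_piFinset_zero]
  congr 1

lemma sum_piFinset_two {M : Type*} [AddCommMonoid M] (s : Finset ℕ) (f : (Fin 2 → ℕ) → M) :
    ∑ j ∈ Fintype.piFinset (fun _ : Fin 2 => s), f j = ∑ a ∈ s, ∑ b ∈ s, f ![a, b] := by
  rw [sum_piFinset_succ]
  apply sum_congr rfl
  intro a _
  rw [sum_piFinset_one]
  apply sum_congr rfl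
  intro b _
  congr 1

lemma sum_piFinset_three {M : Type*} [AddCommMonoid M] (s : Finset ℕ) (f : (Fin 3 → ℕ) → M) :
    ∑ j ∈ Fintype.piFinset (fun _ : Fin 3 => s), f j
      = ∑ a ∈ s, ∑ b ∈ s, ∑ c ∈ s, f ![a, b, c] := by
  rw [sum_piFinset_succ]
  apply sum_congr rfl
  intro a _
  rw [sum_piFinset_two]
  apply sum_congr rfl
  intro b _
  apply sum_congr rfl
  intro c _
  congr 1

lemma eval_C0 (p : ℕ) (x : ℚ) : (Cpoly p [0]).eval x = gg p x := by
  rw [Cpoly, Polynomial.eval_finset_sum]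
  rw [show (∑ j ∈ Fintype.piFinset (fun _ : Fin ([0]:List ℕ).length => Finset.range (p + 1)), Polynomial.eval x ((if (∑ i, j i) + ([0]:List ℕ).getLastD 0 ≤ p then Polynomial.C (∏ i : Fin ([0]:List ℕ).length, ((p + 1 - ([0]:List ℕ).get i - ∑ i' ∈ Finset.Iio i, j i').choose (j i) : ℚ) * bernoulli' (j i) / ((p + 1 - ([0]:List ℕ).get i - ∑ i' ∈ Finset.Iio i, j i' : ℕ) : ℚ)) * Polynomial.X ^ (p + 1 - ([0]:List ℕ).getLastD 0 - ∑ i, j i) else 0)) ) = _ from sum_piFinset_one (range (p+1)) _]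
  rw [gg]
  apply sum_congr rfl
  intro a ha
  rw [if_pos]
  · rw [Polynomial.eval_mul, Polynomial.eval_C, Polynomial.eval_pow, Polynomial.eval_X]
    simp only [Fin.prod_univ_one, Fin.sum_univ_one, Matrix.cons_val_zero, List.get, List.getLastD]
    rw [bb]
    norm_num
  · simp only [Fin.sum_univ_one, Matrix.cons_val_zero, List.getLastD]
    simpa using Finset.mem_range_succ_iff.mp ha

lemma eval_C1 (p : ℕ) (x : ℚ) :
    (Cpoly p [0,1]).eval x = ∑ a ∈ range p, bb p a * gg (p-1-a) x := by
  rw [Cpoly, Polynomial.eval_finset_sum]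
  rw [show (∑ j ∈ Fintype.piFinset (fun _ : Fin ([0,1]:List ℕ).length => Finset.range (p + 1)), Polynomial.eval x ((if (∑ i, j i) + ([0,1]:List ℕ).getLastD 0 ≤ p then Polynomial.C (∏ i : Fin ([0,1]:List ℕ).length, ((p + 1 - ([0,1]:List ℕ).get i - ∑ i' ∈ Finset.Iio i, j i').choose (j i) : ℚ) * bernoulli' (j i) / ((p + 1 - ([0,1]:List ℕ).get i - ∑ i' ∈ Finset.Iio i, j i' : ℕ) : ℚ)) * Polynomial.X ^ (p + 1 - ([0,1]:List ℕ).getLastD 0 - ∑ i, j i) else 0)) ) = _ from sum_piFinset_two (range (p+1)) _]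
  rw [(Finset.sum_subset (Finset.range_subset_range.mpr (Nat.le_succ p)) ?hz1).symm]
  apply sum_congr rfl
  intro a ha
  rw [gg, Finset.mul_sum]
  rw [show p - 1 - a + 1 = p - a from by have := mem_range.mp ha; omega]
  rw [(Finset.sum_subset (Finset.range_subset_range.mpr (by omega : p - a ≤ p + 1)) ?hz2).symm]
  apply sum_congr rfl
  intro b hb
  · have h0 : Finset.Iio (0 : Fin 2) = ∅ := by decide
    have h1 : Finset.Iio (1 : Fin 2) = {0} := by decide
    rw [if_pos]
    · rw [Polynomial.eval_mul, Polynomial.eval_C, Polynomial.eval_pow, Polynomial.eval_X]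
      show (∏ i : Fin 2,
        (((p + 1 - ([0,1]:List ℕ).get i - ∑ i' ∈ Finset.Iio i, ![a,b] i').choose (![a,b] i) : ℚ)
          * bernoulli' (![a,b] i)
          / ((p + 1 - ([0,1]:List ℕ).get i - ∑ i' ∈ Finset.Iio i, ![a,b] i' : ℕ) : ℚ)))
        * x ^ (p + 1 - ([0,1]:List ℕ).getLastD 0 - ∑ i : Fin 2, ![a,b] i) = _
      rw [Fin.prod_univ_two, Fin.sum_univ_two]
      simp only [Matrix.cons_val_zero, Matrix.cons_val_one, Matrix.head_cons, h0, h1,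
        Finset.sum_empty, Finset.sum_singleton,
        show ([0,1]:List ℕ).get (0 : Fin 2) = 0 from rfl,
        show ([0,1]:List ℕ).get (1 : Fin 2) = 1 from rfl,
        show ([0,1]:List ℕ).getLastD 0 = 1 from rfl]
      rw [bb, bb]
      rw [show p - 1 - a + 1 = p - a from by have := Finset.mem_range.mp ha; omega]
      rw [show p + 1 - 1 - (a + b) = p - a - b from by omega]
      rw [show p + 1 - 0 - 0 = p + 1 from by omega, show p + 1 - 1 - a = p - a from by omega]
      ring
    · show (∑ i : Fin 2, ![a,b] i) + 1 ≤ p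
      rw [Fin.sum_univ_two]
      simp only [Matrix.cons_val_zero, Matrix.cons_val_one, Matrix.head_cons]
      have := Finset.mem_range.mp ha; have := Finset.mem_range.mp hb; omega
  case hz2 =>
    intro b hb hnb
    rw [if_neg]
    · simp
    · show ¬ ((∑ i : Fin 2, ![a,b] i) + 1 ≤ p)
      rw [Fin.sum_univ_two]
      simp only [Matrix.cons_val_zero, Matrix.cons_val_one, Matrix.head_cons]
      have := Finset.mem_range.mp ha
      have : ¬ b < p - a := fun h => hnb (Finset.mem_range.mpr h)
      omega
  case hz1 =>
    intro a ha hna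
    apply Finset.sum_eq_zero
    intro b hb
    rw [if_neg]
    · simp
    · show ¬ ((∑ i : Fin 2, ![a,b] i) + 1 ≤ p)
      rw [Fin.sum_univ_two]
      simp only [Matrix.cons_val_zero, Matrix.cons_val_one, Matrix.head_cons]
      have : ¬ a < p := fun h => hna (Finset.mem_range.mpr h)
      omega


lemma eval_C11 (p : ℕ) (x : ℚ) :
    (Cpoly p [0,1,1]).eval x
      = ∑ a ∈ range p, bb p a * ∑ b ∈ range (p-a), bb (p-1-a) b * gg (p-1-a-b) x := by
  rw [Cpoly, Polynomial.eval_finset_sum]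
  rw [show (∑ j ∈ Fintype.piFinset (fun _ : Fin ([0,1,1]:List ℕ).length => Finset.range (p + 1)), Polynomial.eval x ((if (∑ i, j i) + ([0,1,1]:List ℕ).getLastD 0 ≤ p then Polynomial.C (∏ i : Fin ([0,1,1]:List ℕ).length, ((p + 1 - ([0,1,1]:List ℕ).get i - ∑ i' ∈ Finset.Iio i, j i').choose (j i) : ℚ) * bernoulli' (j i) / ((p + 1 - ([0,1,1]:List ℕ).get i - ∑ i' ∈ Finset.Iio i, j i' : ℕ) : ℚ)) * Polynomial.X ^ (p + 1 - ([0,1,1]:List ℕ).getLastD 0 - ∑ i, j i) else 0)) ) = _ from sum_piFinset_three (range (p+1)) _]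
  rw [(Finset.sum_subset (Finset.range_subset_range.mpr (Nat.le_succ p)) ?hz1).symm]
  apply sum_congr rfl
  intro a ha
  rw [Finset.mul_sum]
  rw [(Finset.sum_subset (Finset.range_subset_range.mpr (by omega : p - a ≤ p + 1)) ?hz2).symm]
  apply sum_congr rfl
  intro b hb
  rw [gg, Finset.mul_sum, Finset.mul_sum]
  rw [show p - 1 - a - b + 1 = p - a - b from by
    have := Finset.mem_range.mp ha; have := Finset.mem_range.mp hb; omega]
  rw [(Finset.sum_subset (Finset.range_subset_range.mpr (by omega : p - a - b ≤ p + 1)) ?hz3).symm]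
  apply sum_congr rfl
  intro c hc
  · have h0 : Finset.Iio (0 : Fin 3) = ∅ := by decide
    have h1 : Finset.Iio (1 : Fin 3) = {0} := by decide
    have h2 : Finset.Iio (2 : Fin 3) = {0, 1} := by decide
    rw [if_pos]
    · rw [Polynomial.eval_mul, Polynomial.eval_C, Polynomial.eval_pow, Polynomial.eval_X]
      show (∏ i : Fin 3,
        (((p + 1 - ([0,1,1]:List ℕ).get i - ∑ i' ∈ Finset.Iio i, ![a,b,c] i').choose (![a,b,c] i) : ℚ)
          * bernoulli' (![a,b,c] i)
          / ((p + 1 - ([0,1,1]:List ℕ).get i - ∑ i' ∈ Finset.Iio i, ![a,b,c] i' : ℕ) : ℚ)))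
        * x ^ (p + 1 - ([0,1,1]:List ℕ).getLastD 0 - ∑ i : Fin 3, ![a,b,c] i) = _
      rw [Fin.prod_univ_three, Fin.sum_univ_three]
      simp only [Matrix.cons_val_zero, Matrix.cons_val_one, Matrix.head_cons, h0, h1, h2,
        Finset.sum_empty, Finset.sum_singleton,
        Finset.sum_pair (by decide : (0 : Fin 3) ≠ 1),
        Matrix.cons_val_two, Matrix.tail_cons,
        show ([0,1,1]:List ℕ).get (0 : Fin 3) = 0 from rfl,
        show ([0,1,1]:List ℕ).get (1 : Fin 3) = 1 from rfl,
        show ([0,1,1]:List ℕ).get (2 : Fin 3) = 1 from rfl,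
        show ([0,1,1]:List ℕ).getLastD 0 = 1 from rfl]
      rw [bb, bb, bb]
      have ha' := Finset.mem_range.mp ha
      have hb' := Finset.mem_range.mp hb
      have hc' := Finset.mem_range.mp hc
      rw [show p - 1 - a + 1 = p - a from by omega]
      rw [show p - 1 - a - b + 1 = p - a - b from by omega]
      rw [show p + 1 - 1 - (a + b + c) = p - a - b - c from by omega]
      rw [show p + 1 - 0 - 0 = p + 1 from by omega]
      rw [show p + 1 - 1 - a = p - a from by omega]
      rw [show p + 1 - 1 - (a + b) = p - a - b from by omega]
      ring
    · show (∑ i : Fin 3, ![a,b,c] i) + 1 ≤ p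
      rw [Fin.sum_univ_three]
      simp only [Matrix.cons_val_zero, Matrix.cons_val_one, Matrix.head_cons, Matrix.cons_val_two,
        Matrix.tail_cons]
      have := Finset.mem_range.mp ha; have := Finset.mem_range.mp hb
      have := Finset.mem_range.mp hc; omega
  case hz3 =>
    intro c hc hnc
    rw [if_neg]
    · simp
    · show ¬ ((∑ i : Fin 3, ![a,b,c] i) + 1 ≤ p)
      rw [Fin.sum_univ_three]
      simp only [Matrix.cons_val_zero, Matrix.cons_val_one, Matrix.head_cons, Matrix.cons_val_two,
        Matrix.tail_cons]
      have := Finset.mem_range.mp ha; have := Finset.mem_range.mp hb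
      have : ¬ c < p - a - b := fun h => hnc (Finset.mem_range.mpr h)
      omega
  case hz2 =>
    intro b hb hnb
    apply Finset.sum_eq_zero
    intro c hc
    rw [if_neg]
    · simp
    · show ¬ ((∑ i : Fin 3, ![a,b,c] i) + 1 ≤ p)
      rw [Fin.sum_univ_three]
      simp only [Matrix.cons_val_zero, Matrix.cons_val_one, Matrix.head_cons, Matrix.cons_val_two,
        Matrix.tail_cons]
      have := Finset.mem_range.mp ha
      have : ¬ b < p - a := fun h => hnb (Finset.mem_range.mpr h)
      omega
  case hz1 =>
    intro a ha hna
    apply Finset.sum_eq_zero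
    intro b hb
    apply Finset.sum_eq_zero
    intro c hc
    rw [if_neg]
    · simp
    · show ¬ ((∑ i : Fin 3, ![a,b,c] i) + 1 ≤ p)
      rw [Fin.sum_univ_three]
      simp only [Matrix.cons_val_zero, Matrix.cons_val_one, Matrix.head_cons, Matrix.cons_val_two,
        Matrix.tail_cons]
      have : ¬ a < p := fun h => hna (Finset.mem_range.mpr h)
      omega

lemma bb_self (p : ℕ) : bb p p = bernoulli' p := by
  rw [bb, Nat.choose_succ_self_right]
  have h : ((p+1 : ℕ) : ℚ) ≠ 0 := by positivity
  field_simp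

lemma gg_succ (q n : ℕ) : gg q ((n:ℚ)+1) = gg q (n:ℚ) + ((n:ℚ)+1)^q := by
  have h1 := gg_eq q (n+1)
  push_cast at h1
  rw [h1, gg_eq, Finset.sum_Icc_succ_top (by omega : 1 ≤ n + 1)]
  push_cast
  ring

lemma L1 (p n : ℕ) :
    (Cpoly p [0,1]).eval ((n:ℚ)+1) * ((n:ℚ)+1)^2
      = (Cpoly p [0,1]).eval (n:ℚ) * ((n:ℚ)+1)^2 + gg p ((n:ℚ)+1)
        - bernoulli' p * ((n:ℚ)+1) := by
  rw [eval_C1, eval_C1]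
  rw [gg, Finset.sum_range_succ, bb_self, show p + 1 - p = 1 from by omega, pow_one]
  rw [Finset.sum_mul, Finset.sum_mul]
  have hkey : ∀ a ∈ range p,
      bb p a * gg (p-1-a) ((n:ℚ)+1) * ((n:ℚ)+1)^2
        = bb p a * gg (p-1-a) (n:ℚ) * ((n:ℚ)+1)^2 + bb p a * ((n:ℚ)+1)^(p+1-a) := by
    intro a ha
    rw [gg_succ, show p + 1 - a = (p-1-a) + 2 from by have := Finset.mem_range.mp ha; omega,
      pow_add]
    ring
  rw [Finset.sum_congr rfl hkey, Finset.sum_add_distrib]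
  ring

lemma L2 (p n : ℕ) :
    (Cpoly p [0,1,1]).eval ((n:ℚ)+1) * ((n:ℚ)+1)
      = (Cpoly p [0,1,1]).eval (n:ℚ) * ((n:ℚ)+1) + (Cpoly p [0,1]).eval ((n:ℚ)+1) := by
  rw [eval_C11, eval_C11, eval_C1]
  rw [Finset.sum_mul, Finset.sum_mul]
  rw [← Finset.sum_add_distrib]
  apply sum_congr rfl
  intro a ha
  have ha' := Finset.mem_range.mp ha
  have hgg : gg (p-1-a) ((n:ℚ)+1)
      = ∑ b ∈ range (p-a), bb (p-1-a) b * ((n:ℚ)+1)^(p-a-b) := by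
    rw [gg, show p - 1 - a + 1 = p - a from by omega]
  rw [hgg, Finset.mul_sum, Finset.mul_sum, Finset.mul_sum, Finset.sum_mul, Finset.sum_mul,
    ← Finset.sum_add_distrib]
  apply sum_congr rfl
  intro b hb
  have hb' := Finset.mem_range.mp hb
  rw [gg_succ, show p - a - b = (p-1-a-b) + 1 from by omega, pow_succ]
  ring

lemma Hs_nil (n : ℕ) : Hs n [] = 1 := rfl

lemma Hs_succ (n : ℕ) (k : ℤ) (ks : List ℤ) :
    Hs (n+1) (k :: ks) = Hs n (k :: ks) + (((n:ℚ)+1) ^ k)⁻¹ * Hs n ks := by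
  show (∑ m ∈ Finset.Icc 1 (n+1), ((m : ℚ) ^ k)⁻¹ * Hs (m - 1) ks) = _
  rw [Finset.sum_Icc_succ_top (by omega : 1 ≤ n+1)]
  have : ((n+1 : ℕ) : ℚ) = (n:ℚ)+1 := by push_cast; ring
  rw [this, Nat.add_sub_cancel]
  rfl

lemma Hs_neg_s7 (p n : ℕ) : Hs n [-(p:ℤ)] = gg p (n:ℚ) := by
  rw [gg_eq]
  show (∑ m ∈ Finset.Icc 1 n, ((m : ℚ) ^ (-(p:ℤ)))⁻¹ * Hs (m - 1) []) = _
  apply sum_congr rfl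
  intro m _
  rw [Hs_nil, zpow_neg, inv_inv, zpow_natCast, mul_one]

lemma Hs_zero (k : ℤ) (ks : List ℤ) : Hs 0 (k :: ks) = 0 := by
  show (∑ m ∈ Finset.Icc (1:ℕ) (0:ℕ), ((m : ℚ) ^ k)⁻¹ * Hs (m - 1) ks) = 0
  simp

lemma gg_zero (q : ℕ) : gg q 0 = 0 := by
  have := gg_eq q 0
  simpa using this

theorem stmt_7' (p : ℕ) (n : ℕ) :
    Hs n [-(p : ℤ), 2, 1] =
      Hs n [-(p : ℤ)] * Hs n [2, 1] - bernoulli' p * Hs n [1, 1]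
        - (Cpoly p [0, 1]).eval (n : ℚ) * Hs n [1] + (Cpoly p [0, 1, 1]).eval (n : ℚ) := by
  induction n with
  | zero =>
      simp only [Nat.cast_zero, Hs_zero, eval_C1, eval_C11, gg_zero, mul_zero, zero_mul,
        sub_zero, zero_sub, add_zero, zero_add, Finset.sum_const_zero, neg_zero]
  | succ n ih =>
      have hy : ((n+1:ℕ):ℚ) = (n:ℚ)+1 := by push_cast; ring
      have hy0 : ((n:ℚ)+1) ≠ 0 := by positivity
      have hS : Hs (n+1) [-(p:ℤ)] = Hs n [-(p:ℤ)] + ((n:ℚ)+1)^p := by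
        rw [Hs_succ, Hs_nil, zpow_neg, inv_inv, zpow_natCast, mul_one]
      have hL : Hs (n+1) [-(p:ℤ),2,1] = Hs n [-(p:ℤ),2,1] + ((n:ℚ)+1)^p * Hs n [2,1] := by
        rw [Hs_succ]
        congr 1
        rw [zpow_neg, inv_inv, zpow_natCast]
      have hA : Hs (n+1) [2,1] = Hs n [2,1] + (((n:ℚ)+1)^2)⁻¹ * Hs n [1] := by
        rw [Hs_succ, show (2:ℤ) = ((2:ℕ):ℤ) from rfl, zpow_natCast]
      have hB : Hs (n+1) [1,1] = Hs n [1,1] + ((n:ℚ)+1)⁻¹ * Hs n [1] := by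
        rw [Hs_succ]
        norm_num
      have hH : Hs (n+1) [1] = Hs n [1] + ((n:ℚ)+1)⁻¹ := by
        rw [Hs_succ, Hs_nil, mul_one]
        norm_num
      have hgp : gg p ((n:ℚ)+1) = Hs n [-(p:ℤ)] + ((n:ℚ)+1)^p := by
        rw [← hS, Hs_neg_s7, hy]
      have h1 := L1 p n
      rw [hgp] at h1
      have h2 := L2 p n
      have hc1 : (Cpoly p [0,1]).eval ((n:ℚ)+1)
          = (Cpoly p [0,1]).eval (n:ℚ) + (Hs n [-(p:ℤ)] + ((n:ℚ)+1)^p) / ((n:ℚ)+1)^2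
            - bernoulli' p / ((n:ℚ)+1) := by
        field_simp
        linear_combination h1
      have hc11 : (Cpoly p [0,1,1]).eval ((n:ℚ)+1)
          = (Cpoly p [0,1,1]).eval (n:ℚ) + (Cpoly p [0,1]).eval ((n:ℚ)+1) / ((n:ℚ)+1) := by
        field_simp
        linear_combination h2
      rw [hy, hL, hS, hA, hB, hH, hc11, hc1, ih]
      field_simp
      ring

/-- `H_n(−p,2,1) = H_n(−p)·H_n(2,1) − B_p·H_n(1,1) − C^{(p)}_1(n)·H_n
+ C^{(p)}_{1,1}(n)`. -/
theorem stmt_7 (p : ℕ) (n : ℕ) (hn : 0 < n) :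
    Hs n [-(p : ℤ), 2, 1] =
      Hs n [-(p : ℤ)] * Hs n [2, 1] - bernoulli' p * Hs n [1, 1]
        - (Cpoly p [0, 1]).eval (n : ℚ) * Hs n [1] + (Cpoly p [0, 1, 1]).eval (n : ℚ) := by
  exact stmt_7' p n
end
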